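/- Let G be a group, k a field, and A a unital associative k-algebra graded by G via submodules 𝒜 : G → Submodule k A forming a graded algebra. Let β : A ⊗[k] A → A ⊗[k] (MonoidAlgebra k G) be the k-linear map determined by β(a ⊗ c) = ∑_{g ∈ G} (a * c_g) ⊗ (single g 1), where c = ∑_g c_g is the decomposition of c into homogeneous components c_g ∈ 𝒜 g (a finite sum). Then β is surjective if and only if A is strongly graded, i.e., 𝒜 g · 𝒜 h = 𝒜 (g h) for all g, h ∈ G. (This is the link between the Hopf-Galois condition for the canonical kG-coaction on a G-graded algebra and strongness of the grading.) -/

import Mathlib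

open TensorProduct in
/-- For a `G`-graded unital associative `k`-algebra `A`, the canonical Galois map
`β : A ⊗[k] A → A ⊗[k] kG` determined on homogeneous elements by
`β (a ⊗ c) = (a * c) ⊗ (single g 1)` for `c ∈ 𝒜 g` (equivalently,
`β (a ⊗ c) = ∑_g (a * c_g) ⊗ single g 1` for general `c`) is surjective if and
only if the grading is strong: `𝒜 g · 𝒜 h = 𝒜 (g h)` for all `g, h`. -/
theorem galois_map_surjective_iff_strongly_graded
    {k A G : Type*} [Field k] [Ring A] [Algebra k A] [Group G] [DecidableEq G]
    (𝒜 : G → Submodule k A)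
    (hdecomp : DirectSum.IsInternal 𝒜)
    (hone : (1 : A) ∈ 𝒜 1)
    (hmul : ∀ g h : G, 𝒜 g * 𝒜 h ≤ 𝒜 (g * h))
    (β : A ⊗[k] A →ₗ[k] A ⊗[k] MonoidAlgebra k G)
    (hβ : ∀ (g : G) (a c : A), c ∈ 𝒜 g →
      β (a ⊗ₜ[k] c) = (a * c) ⊗ₜ[k] MonoidAlgebra.single g 1) :
    Function.Surjective β ↔ ∀ g h : G, 𝒜 g * 𝒜 h = 𝒜 (g * h) := by
  classical
  letI : DirectSum.Decomposition 𝒜 := hdecomp.chooseDecomposition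
  constructor
  · intro hsurj
    -- key projection fact
    have hproj : ∀ (g : G) (y : A), y ∈ 𝒜 g → ∀ x : A,
        (DirectSum.decompose 𝒜 (x * y) 1 : A) = (DirectSum.decompose 𝒜 x g⁻¹ : A) * y := by
      intro g y hy x
      induction x using DirectSum.Decomposition.inductionOn 𝒜 with
      | zero => simp
      | @homogeneous i m =>
        by_cases hig : i * g = 1
        · have hi : i = g⁻¹ := eq_inv_of_mul_eq_one_left hig
          have hmem : (m : A) * y ∈ 𝒜 1 := by
            rw [← hig]; exact hmul i g (Submodule.mul_mem_mul m.2 hy)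
          rw [DirectSum.decompose_of_mem_same 𝒜 hmem,
            DirectSum.decompose_of_mem_same 𝒜 (hi ▸ m.2)]
        · have hmem : (m : A) * y ∈ 𝒜 (i * g) := hmul i g (Submodule.mul_mem_mul m.2 hy)
          have hne : i ≠ g⁻¹ := by
            intro h; exact hig (by rw [h, inv_mul_cancel])
          rw [DirectSum.decompose_of_mem_ne 𝒜 hmem hig,
            DirectSum.decompose_of_mem_ne 𝒜 m.2 hne, zero_mul]
      | add x y hx hy =>
        rw [add_mul, DirectSum.decompose_add, DirectSum.add_apply, Submodule.coe_add, hx, hy,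
          DirectSum.decompose_add, DirectSum.add_apply, Submodule.coe_add, add_mul]
    have key : ∀ g : G, (1 : A) ∈ 𝒜 g⁻¹ * 𝒜 g := by
      intro g
      obtain ⟨x, hx⟩ := hsurj ((1 : A) ⊗ₜ[k] MonoidAlgebra.single g 1)
      obtain ⟨S, rfl⟩ := TensorProduct.exists_finset x
      -- β on a general tensor
      have hβ' : ∀ a c : A, β (a ⊗ₜ[k] c) = ∑ h ∈ (DirectSum.decompose 𝒜 c).support,
          (a * (DirectSum.decompose 𝒜 c h : A)) ⊗ₜ[k] MonoidAlgebra.single h 1 := by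
        intro a c
        conv_lhs => rw [← DirectSum.sum_support_decompose 𝒜 c]
        rw [tmul_sum, map_sum]
        exact Finset.sum_congr rfl fun h _ => hβ h a _ (SetLike.coe_mem _)
      -- evaluation at g
      set E : A ⊗[k] MonoidAlgebra k G →ₗ[k] A :=
        (TensorProduct.rid k A).toLinearMap ∘ₗ LinearMap.lTensor A (Finsupp.lapply g ∘ₗ (MonoidAlgebra.coeffLinearEquiv k (S := k) (M := G)).toLinearMap) with hE
      have hEval : ∀ (a : A) (f : MonoidAlgebra k G), E (a ⊗ₜ[k] f) = f.coeff g • a := by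
        intro a f
        simp only [hE, LinearMap.coe_comp, Function.comp_apply, LinearMap.lTensor_tmul,
          LinearEquiv.coe_coe, TensorProduct.rid_tmul, Finsupp.lapply_apply]
        rfl
      have h1 : ∑ p ∈ S, p.1 * (DirectSum.decompose 𝒜 p.2 g : A) = 1 := by
        rw [map_sum] at hx
        have := congrArg E hx
        rw [map_sum, hEval, MonoidAlgebra.coeff_single, Finsupp.single_eq_same, one_smul] at this
        rw [← this]
        refine Finset.sum_congr rfl fun p _ => ?_
        rw [hβ' p.1 p.2, map_sum]
        have : ∀ h ∈ (DirectSum.decompose 𝒜 p.2).support,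
            E ((p.1 * (DirectSum.decompose 𝒜 p.2 h : A)) ⊗ₜ[k] MonoidAlgebra.single h 1)
              = if h = g then p.1 * (DirectSum.decompose 𝒜 p.2 h : A) else 0 := by
          intro h _
          rw [hEval]
          rw [show (MonoidAlgebra.single h (1:k)).coeff g = if h = g then (1:k) else 0 from
            Finsupp.single_apply]
          split <;> simp
        rw [Finset.sum_congr rfl this, Finset.sum_ite_eq' _ g]
        split
        · rfl
        · next hns =>
          have : DirectSum.decompose 𝒜 p.2 g = 0 := DFinsupp.notMem_support_iff.mp hns
          rw [this]; simp
      have h2 : (1 : A) = ∑ p ∈ S,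
          (DirectSum.decompose 𝒜 p.1 g⁻¹ : A) * (DirectSum.decompose 𝒜 p.2 g : A) := by
        calc (1 : A) = (DirectSum.decompose 𝒜 (1 : A) 1 : A) :=
              (DirectSum.decompose_of_mem_same 𝒜 hone).symm
          _ = (DirectSum.decompose 𝒜 (∑ p ∈ S, p.1 * (DirectSum.decompose 𝒜 p.2 g : A)) 1 : A) :=
              by rw [h1]
          _ = ∑ p ∈ S, (DirectSum.decompose 𝒜 (p.1 * (DirectSum.decompose 𝒜 p.2 g : A)) 1 : A) :=
              by rw [DirectSum.decompose_sum]; rw [DFinsupp.finset_sum_apply]; push_cast; rfl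
          _ = ∑ p ∈ S, (DirectSum.decompose 𝒜 p.1 g⁻¹ : A) * (DirectSum.decompose 𝒜 p.2 g : A) :=
              Finset.sum_congr rfl fun p _ => hproj g _ (SetLike.coe_mem _) p.1
      rw [h2]
      exact Submodule.sum_mem _ fun p _ =>
        Submodule.mul_mem_mul (SetLike.coe_mem _) (SetLike.coe_mem _)
    intro g h
    refine le_antisymm (hmul g h) fun x hx => ?_
    have h1 : (1 : A) ∈ 𝒜 g * 𝒜 g⁻¹ := by simpa using key g⁻¹
    have : (1 : A) * x ∈ (𝒜 g * 𝒜 g⁻¹) * 𝒜 (g * h) := Submodule.mul_mem_mul h1 hx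
    rw [one_mul] at this
    rw [mul_assoc] at this
    have hle : 𝒜 g * (𝒜 g⁻¹ * 𝒜 (g * h)) ≤ 𝒜 g * 𝒜 h := by
      refine mul_le_mul' le_rfl ?_
      have := hmul g⁻¹ (g * h)
      rwa [inv_mul_cancel_left] at this
    exact hle this
  · intro hstrong
    rw [← LinearMap.range_eq_top, eq_top_iff]
    rintro y -
    induction y using TensorProduct.induction_on with
    | zero => exact zero_mem _
    | add x y hx hy => exact add_mem hx hy
    | tmul a f =>
      induction f using MonoidAlgebra.induction_linear with
      | zero => rw [tmul_zero]; exact zero_mem _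
      | add f₁ f₂ h₁ h₂ => rw [tmul_add]; exact add_mem h₁ h₂
      | single g r =>
        have hsingle : (MonoidAlgebra.single g r : MonoidAlgebra k G)
            = r • MonoidAlgebra.single g 1 := by
          rw [MonoidAlgebra.smul_single, smul_eq_mul, mul_one]
        rw [hsingle, tmul_smul]
        refine Submodule.smul_mem _ r ?_
        have hone' : (1 : A) ∈ 𝒜 g⁻¹ * 𝒜 g := by
          rw [hstrong g⁻¹ g, inv_mul_cancel]; exact hone
        have claim : ∀ z ∈ 𝒜 g⁻¹ * 𝒜 g,
            (a * z) ⊗ₜ[k] (MonoidAlgebra.single g 1 : MonoidAlgebra k G) ∈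
              LinearMap.range β := by
          intro z hz
          refine Submodule.mul_induction_on hz ?_ ?_
          · intro m hm n hn
            exact ⟨(a * m) ⊗ₜ[k] n, by rw [hβ g _ n hn, mul_assoc]⟩
          · intro x y hx hy
            rw [mul_add, add_tmul]
            exact add_mem hx hy
        simpa using claim 1 hone'
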